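/- Let κ₁, κ₂ > 0 be rational numbers with κ₂/κ₁ = p/q, where p and q are positive integers with no common divisor, and let P be a nonzero real polynomial in two variables which is κ-homogeneous of degree one. Then P factorizes as P(x₁,x₂) = c x₁^{ν₁} x₂^{ν₂} ∏_{l=1}^M (x₂^q − λ_l x₁^p)^{n_l} (an identity of polynomials with complex coefficients), where c ≠ 0 is a real constant, ν₁, ν₂ ∈ ℕ, M ∈ ℕ, n_l ∈ ℕ∖{0}, and λ₁,…,λ_M ∈ ℂ∖{0} are distinct. -/

import Mathlib

open scoped ENNReal Topology FourierTransform InnerProductSpace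
open MeasureTheory Filter Set

noncomputable section

/-! ### Newton polyhedra, Newton distance, height, adapted coordinates -/

/-- The mixed partial derivative `∂₁^a ∂₂^b φ (0,0)` of a function of two real variables. -/
def pderiv2 (φ : ℝ × ℝ → ℝ) (a b : ℕ) : ℝ :=
  iteratedDeriv a (fun x₁ => iteratedDeriv b (fun x₂ => φ (x₁, x₂)) 0) 0

/-- The Taylor support of `φ` at the origin. -/
def TaylorSupport (φ : ℝ × ℝ → ℝ) : Set (ℕ × ℕ) :=
  {p | pderiv2 φ p.1 p.2 ≠ 0}

/-- `φ` is of finite type at the origin if its Taylor support is nonempty. -/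
def FiniteType (φ : ℝ × ℝ → ℝ) : Prop :=
  (TaylorSupport φ).Nonempty

/-- The Newton polyhedron of `φ` at the origin: the convex hull of the union of the
quadrants `(α₁,α₂) + ℝ₊²` over all `(α₁,α₂)` in the Taylor support of `φ`. -/
def NewtonPolyhedron (φ : ℝ × ℝ → ℝ) : Set (ℝ × ℝ) :=
  convexHull ℝ (⋃ p ∈ TaylorSupport φ, {q : ℝ × ℝ | (p.1 : ℝ) ≤ q.1 ∧ (p.2 : ℝ) ≤ q.2})

/-- The Newton distance `d(φ)`: the coordinate `d` of the point `(d,d)` where the bisectrix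
`t₁ = t₂` meets the boundary of the Newton polyhedron. -/
def newtonDistance (φ : ℝ × ℝ → ℝ) : ℝ :=
  sInf {t : ℝ | ((t, t) : ℝ × ℝ) ∈ NewtonPolyhedron φ}

/-- A (smooth) local coordinate system at the origin: a smooth map near `0` fixing `0`
whose differential at `0` is invertible, i.e. a smooth local diffeomorphism fixing `0`. -/
def LocalCoordSystem (η : ℝ × ℝ → ℝ × ℝ) : Prop :=
  η 0 = 0 ∧ (∃ U : Set (ℝ × ℝ), IsOpen U ∧ (0 : ℝ × ℝ) ∈ U ∧ ContDiffOn ℝ (⊤ : ℕ∞) η U) ∧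
    ∃ L : (ℝ × ℝ) ≃L[ℝ] ℝ × ℝ, fderiv ℝ η 0 = (L : (ℝ × ℝ) →L[ℝ] ℝ × ℝ)

/-- The set of Newton distances of `φ` in all local coordinate systems at the origin. -/
def heightSet (φ : ℝ × ℝ → ℝ) : Set ℝ :=
  {d | ∃ η, LocalCoordSystem η ∧ d = newtonDistance (φ ∘ η)}

/-- The height `h(φ)`: the supremum of the Newton distances of `φ` over all local
coordinate systems at the origin. -/
def height (φ : ℝ × ℝ → ℝ) : ℝ :=
  sSup (heightSet φ)

/-- The principal face `π(φ)`: the face of minimal dimension of the Newton polyhedron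
containing the point `(d(φ), d(φ))`, realized as the intersection of all extreme (i.e. face)
subsets of the Newton polyhedron containing this point. -/
def principalFace (φ : ℝ × ℝ → ℝ) : Set (ℝ × ℝ) :=
  ⋂₀ {F | IsExtreme ℝ (NewtonPolyhedron φ) F ∧
      ((newtonDistance φ, newtonDistance φ) : ℝ × ℝ) ∈ F}

-- The principal part `φ_pr` of `φ`: the sum of the Taylor monomials on the principal face.
open Classical in
def principalPart (φ : ℝ × ℝ → ℝ) : ℝ × ℝ → ℝ := fun x =>
  ∑ᶠ p : ℕ × ℕ,
    if _h :  (((p.1 : ℝ), (p.2 : ℝ)) : ℝ × ℝ) ∈ principalFace φ then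
      (pderiv2 φ p.1 p.2 / (p.1.factorial * p.2.factorial)) * x.1 ^ p.1 * x.2 ^ p.2
    else 0

/-- The order of vanishing of `P` at the point `x` (the smallest order of a nonvanishing
derivative). -/
def vanishOrder (P : ℝ × ℝ → ℝ) (x : ℝ × ℝ) : ℕ :=
  sInf {k : ℕ | iteratedFDeriv ℝ k P x ≠ 0}

/-- `m(P)`: the maximal order of vanishing of `P` along the unit circle. -/
def circleOrder (P : ℝ × ℝ → ℝ) : ℝ :=
  sSup ((fun x => (vanishOrder P x : ℝ)) '' {x : ℝ × ℝ | x.1 ^ 2 + x.2 ^ 2 = 1})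

-- Varchenko's exponent `ν(φ) ∈ {0,1}`.
open Classical in
def varNu (φ : ℝ × ℝ → ℝ) : ℕ :=
  if _h :  2 ≤ height φ ∧ ∃ η, LocalCoordSystem η ∧ newtonDistance (φ ∘ η) = height φ ∧
      principalFace (φ ∘ η) = {((newtonDistance (φ ∘ η), newtonDistance (φ ∘ η)) : ℝ × ℝ)}
  then 1 else 0

/-! ### Surfaces, surface measures, Fourier transforms of measures -/

abbrev Euc (n : ℕ) : Type := EuclideanSpace ℝ (Fin n)

/-- The point `(a, b, c)` of `ℝ³`. -/
def pt3 (a b c : ℝ) : Euc 3 := WithLp.toLp 2 ![a, b, c]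

/-- The graph of `φ` over `Ω`, as a subset of `ℝ³`. -/
def graphSet (φ : ℝ × ℝ → ℝ) (Ω : Set (ℝ × ℝ)) : Set (Euc 3) :=
  {q | ∃ x ∈ Ω, q = pt3 x.1 x.2 (φ x)}

/-- The Fourier transform `μ̂(ξ)` of the measure `dμ = ρ dσ` on the graph of `φ`, where
`dσ` is the surface measure (2-dimensional Hausdorff measure). -/
def fourierSurf (φ : ℝ × ℝ → ℝ) (Ω : Set (ℝ × ℝ)) (ρ : Euc 3 → ℝ) (ξ : Euc 3) : ℂ :=
  ∫ x in graphSet φ Ω, Complex.exp (-(Complex.I) * (⟪ξ, x⟫_ℝ : ℂ)) * (ρ x : ℂ) ∂(μH[2])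

/-- The maximal operator associated to the dilates of the measure `ρ dσ` on `S ⊆ ℝⁿ`,
where `dσ` is the `(n-1)`-dimensional Hausdorff (surface) measure. -/
def maxOp (n : ℕ) (S : Set (Euc n)) (ρ : Euc n → ℝ) (f : Euc n → ℝ) (x : Euc n) : ℝ≥0∞ :=
  ⨆ (t : ℝ) (_ : 0 < t),
    ENNReal.ofReal |∫ y in S, f (x - t • y) * ρ y ∂(μH[(n : ℝ) - 1])|

/-- A priori boundedness on `L^p` of the maximal operator associated to `S` and `ρ`. -/
def MaxBoundedLp (n : ℕ) (S : Set (Euc n)) (ρ : Euc n → ℝ) (p : ℝ) : Prop :=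
  ∃ C : ℝ, 0 < C ∧ ∀ f : SchwartzMap (Euc n) ℝ,
    (∫⁻ x, maxOp n S ρ (⇑f) x ^ p) ^ (1 / p) ≤
      ENNReal.ofReal C * eLpNorm (⇑f) (ENNReal.ofReal p) volume

/-- `S` is represented near `x⁰`, after a rigid motion of `ℝ³` taking `x⁰` to the origin,
as the graph of `φ : Ω → ℝ` with `φ(0,0) = 0` and `∇φ(0,0) = 0`. -/
def IsGraphRepAt (S : Set (Euc 3)) (x0 : Euc 3) (Ω : Set (ℝ × ℝ)) (φ : ℝ × ℝ → ℝ) : Prop :=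
  ∃ (R : Euc 3 ≃ᵢ Euc 3) (W : Set (Euc 3)),
    R x0 = 0 ∧ IsOpen Ω ∧ ((0, 0) : ℝ × ℝ) ∈ Ω ∧ IsOpen W ∧ (0 : Euc 3) ∈ W ∧
    ContDiffOn ℝ (⊤ : ℕ∞) φ Ω ∧ φ (0, 0) = 0 ∧ fderiv ℝ φ (0, 0) = 0 ∧
    (R '' S) ∩ W = graphSet φ Ω ∩ W

/-- `S ⊆ ℝ³` is a hypersurface of finite type: near each of its points it is a rigid image of
the graph of a smooth function of finite type. -/
def FiniteTypeHypersurface (S : Set (Euc 3)) : Prop :=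
  ∀ x ∈ S, ∃ (Ω : Set (ℝ × ℝ)) (φ : ℝ × ℝ → ℝ),
    IsGraphRepAt S x Ω φ ∧ FiniteType φ

/-- Transversality: no affine tangent plane of `S` passes through the origin,
i.e. `x ∉ T_x S` for every `x ∈ S`. -/
def Transversal (S : Set (Euc 3)) : Prop :=
  ∀ x ∈ S, x ∉ tangentConeAt ℝ S x

/-- The `L²(ρ dσ)`–`L^p(ℝ³)` Fourier restriction estimate with constant `C` for the graph
of `φ`, tested on Schwartz functions. -/
def RestrictionEst (φ : ℝ × ℝ → ℝ) (Ω : Set (ℝ × ℝ)) (ρ : Euc 3 → ℝ) (p C : ℝ) : Prop :=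
  ∀ f : SchwartzMap (Euc 3) ℂ,
    (∫⁻ x in graphSet φ Ω, (‖𝓕 (⇑f) x‖₊ : ℝ≥0∞) ^ (2 : ℝ) * ENNReal.ofReal (ρ x) ∂(μH[2]))
        ^ (1 / (2 : ℝ)) ≤
      ENNReal.ofReal C * eLpNorm (⇑f) (ENNReal.ofReal p) volume

/-! ### Non-adapted coordinates: shear, augmented Newton polyhedron, restriction height -/

/-- `φ` expressed in the sheared coordinates `y₁ = x₁`, `y₂ = x₂ - ψ(x₁)`;
i.e. `φ^a(y) = φ(y₁, y₂ + ψ(y₁))`. -/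
def shear (ψ : ℝ → ℝ) (φ : ℝ × ℝ → ℝ) : ℝ × ℝ → ℝ :=
  fun y => φ (y.1, y.2 + ψ y.1)

/-- The augmented Newton polyhedron `N^r(φ^a)`: the convex hull of `N(φ^a)` together with
the half-line `L⁺` of the principal line `L = {κ₁ t₁ + κ₂ t₂ = 1}` lying above the points of
`N(φ^a) ∩ L`. -/
def augNewton (φa : ℝ × ℝ → ℝ) (κ : ℝ × ℝ) : Set (ℝ × ℝ) :=
  convexHull ℝ (NewtonPolyhedron φa ∪
    {p : ℝ × ℝ | κ.1 * p.1 + κ.2 * p.2 = 1 ∧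
      ∃ q ∈ NewtonPolyhedron φa, κ.1 * q.1 + κ.2 * q.2 = 1 ∧ q.2 ≤ p.2})

/-- The restriction height `h^r(φ)`: `h^r(φ) + 1` is the second coordinate of the point where
the line `Δ^(m) = {(t, t + m + 1)}` meets the boundary of the augmented Newton polyhedron of
`φ^a`. -/
def rHeight (φa : ℝ × ℝ → ℝ) (κ : ℝ × ℝ) (m : ℕ) : ℝ :=
  (m : ℝ) + sInf {t : ℝ | ((t, t + m + 1) : ℝ × ℝ) ∈ augNewton φa κ}

/-- The linear height `h_lin(φ)`: the supremum of the Newton distances of `φ` over all linear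
coordinate systems. -/
def hLin (φ : ℝ × ℝ → ℝ) : ℝ :=
  sSup {d | ∃ A : (ℝ × ℝ) ≃L[ℝ] ℝ × ℝ, d = newtonDistance (φ ∘ A)}

/-- The principal face of `N(φ)` is a compact edge lying on the supporting line
`κ₁ t₁ + κ₂ t₂ = 1` with `0 < κ₁ ≤ κ₂`. -/
def PrincipalEdge (φ : ℝ × ℝ → ℝ) (κ : ℝ × ℝ) : Prop :=
  0 < κ.1 ∧ κ.1 ≤ κ.2 ∧
  (principalFace φ ⊆ {p : ℝ × ℝ | κ.1 * p.1 + κ.2 * p.2 = 1}) ∧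
  (∀ p ∈ NewtonPolyhedron φ, 1 ≤ κ.1 * p.1 + κ.2 * p.2) ∧
  IsCompact (principalFace φ) ∧
  principalFace φ ≠ {((newtonDistance φ, newtonDistance φ) : ℝ × ℝ)}


/-!
Comparing coefficients in `P(r^κ₁ x₁, r^κ₂ x₂) = r P(x₁, x₂)` shows that every monomial
`x₁^a x₂^b` of `P` lies on the line `κ₁ a + κ₂ b = 1`, i.e. `q a + p b` is constant on the
support. As `p` and `q` are coprime, the exponents `a` are congruent modulo `p` and the
exponents `b` modulo `q`; factoring out the minimal powers leaves a polynomial in `x₁^p`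
and `x₂^q` which is homogeneous. A binary form over `ℂ` splits into linear factors, and
these become the factors `x₂^q - λ x₁^p` after the substitution.
-/

open MvPolynomial

theorem MvPolynomial.coeff_bind₁_C_mul_X {σ R : Type*} [CommSemiring R] (c : σ → R)
    (P : MvPolynomial σ R) (m : σ →₀ ℕ) :
    coeff m (bind₁ (fun i => C (c i) * X i) P) = coeff m P * m.prod fun i k => c i ^ k := by
  classical
  induction P using MvPolynomial.induction_on' with
  | monomial d r =>
    have h : bind₁ (fun i => C (c i) * X i) (monomial d r)
        = monomial d (r * d.prod fun i k => c i ^ k) := by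
      rw [bind₁_monomial, monomial_eq]
      simp only [mul_pow, Finset.prod_mul_distrib, ← map_pow, ← map_prod, map_mul, Finsupp.prod]
      ring
    rw [h, coeff_monomial, coeff_monomial]
    split_ifs with hdm
    · rw [hdm]
    · rw [zero_mul]
  | add P Q hP hQ => simp [hP, hQ, add_mul]

theorem MvPolynomial.prod_pow_eq_of_eval_mul_eq {σ K : Type*} [Field K] [Infinite K]
    {P : MvPolynomial σ K} {c : σ → K} {t : K} (h : ∀ x, eval (c * x) P = t * eval x P)
    {m : σ →₀ ℕ} (hm : m ∈ P.support) : (m.prod fun i k => c i ^ k) = t := by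
  have hP : bind₁ (fun i => C (c i) * X i) P = C t * P := funext fun x => by
    show aeval x _ = _
    rw [aeval_bind₁]
    simpa [Pi.mul_def] using h x
  have := congrArg (coeff m) hP
  rw [coeff_bind₁_C_mul_X, coeff_C_mul, mul_comm] at this
  exact mul_right_cancel₀ (mem_support_iff.mp hm) this

theorem weight_eq_one_of_mem_support {κ₁ κ₂ : ℝ} {P : MvPolynomial (Fin 2) ℝ}
    (hhom : ∀ r : ℝ, 0 < r → ∀ x₁ x₂ : ℝ,
      eval ![r ^ κ₁ * x₁, r ^ κ₂ * x₂] P = r * eval ![x₁, x₂] P)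
    {m : Fin 2 →₀ ℕ} (hm : m ∈ P.support) : κ₁ * m 0 + κ₂ * m 1 = 1 := by
  have hscale : ∀ x, eval (![Real.exp κ₁, Real.exp κ₂] * x) P = Real.exp 1 * eval x P := by
    intro x
    have := hhom _ (Real.exp_pos 1) (x 0) (x 1)
    have hx : ![x 0, x 1] = x := by ext i; fin_cases i <;> rfl
    have hcx : ![Real.exp κ₁ * x 0, Real.exp κ₂ * x 1] = ![Real.exp κ₁, Real.exp κ₂] * x := by
      ext i; fin_cases i <;> rfl
    rwa [Real.exp_one_rpow, Real.exp_one_rpow, hcx, hx] at this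
  have := prod_pow_eq_of_eval_mul_eq hscale hm
  rw [Finsupp.prod_fintype _ _ (by simp), Fin.prod_univ_two] at this
  simp only [Matrix.cons_val_zero, Matrix.cons_val_one, ← Real.exp_nat_mul, ← Real.exp_add,
    Real.exp_eq_exp] at this
  linarith

theorem nat_weight_eq_of_ratio {κ₁ κ₂ : ℝ} (hκ₁ : κ₁ ≠ 0) {p q : ℕ} (hq : q ≠ 0)
    (hratio : κ₂ / κ₁ = (p : ℝ) / (q : ℝ)) {a b a' b' : ℕ}
    (h : κ₁ * a + κ₂ * b = 1) (h' : κ₁ * a' + κ₂ * b' = 1) :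
    q * a + p * b = q * a' + p * b' := by
  have hκ : κ₂ * q = p * κ₁ := by
    rwa [div_eq_div_iff hκ₁ (by exact_mod_cast hq)] at hratio
  have : κ₁ * ((q * a + p * b : ℕ) : ℝ) = κ₁ * ((q * a' + p * b' : ℕ) : ℝ) := by
    push_cast
    linear_combination (q : ℝ) * (h - h') - ((b : ℝ) - b') * hκ
  exact_mod_cast mul_left_cancel₀ hκ₁ this

theorem Nat.Coprime.dvd_sub_of_mul_add_mul_eq {p q a b a' b' : ℕ} (hcop : p.Coprime q)
    (h : q * a + p * b = q * a' + p * b') : p ∣ a - a' := by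
  rcases le_total a a' with ha | ha
  · simp [Nat.sub_eq_zero_of_le ha]
  refine (Nat.modEq_iff_dvd' ha).mp (Nat.ModEq.cancel_left_of_coprime hcop ?_)
  simpa [Nat.ModEq, Nat.add_mul_mod_self_left] using congrArg (· % p) h.symm

theorem exists_eq_add_mul_of_weight_eq {ι : Type*} {p q : ℕ} (hp : 0 < p) (hq : 0 < q)
    (hcop : p.Coprime q) (a b : ι → ℕ) (S : Finset ι)
    (hS : ∀ i ∈ S, ∀ i' ∈ S, q * a i + p * b i = q * a i' + p * b i') :
    ∃ (ν₁ ν₂ N : ℕ) (j k : ι → ℕ), ∀ i ∈ S,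
      a i = ν₁ + p * j i ∧ b i = ν₂ + q * k i ∧ j i + k i = N := by
  rcases S.eq_empty_or_nonempty with rfl | hne
  · exact ⟨0, 0, 0, 0, 0, by simp⟩
  obtain ⟨i₁, hi₁, ha₁⟩ := S.exists_mem_eq_inf' hne a
  obtain ⟨i₂, hi₂, hb₂⟩ := S.exists_mem_eq_inf' hne b
  set ν₁ := S.inf' hne a
  set ν₂ := S.inf' hne b
  have ha : ∀ i ∈ S, a i = ν₁ + p * ((a i - ν₁) / p) := fun i hi => by
    have hdvd : p ∣ a i - ν₁ := ha₁ ▸ hcop.dvd_sub_of_mul_add_mul_eq (hS i hi i₁ hi₁)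
    have := S.inf'_le a hi
    have := Nat.mul_div_cancel' hdvd
    omega
  have hb : ∀ i ∈ S, b i = ν₂ + q * ((b i - ν₂) / q) := fun i hi => by
    have hdvd : q ∣ b i - ν₂ := hb₂ ▸ hcop.symm.dvd_sub_of_mul_add_mul_eq (b := a i)
      (b' := a i₂) (by linarith [hS i hi i₂ hi₂])
    have := S.inf'_le b hi
    have := Nat.mul_div_cancel' hdvd
    omega
  refine ⟨ν₁, ν₂, (b i₁ - ν₂) / q, fun i => (a i - ν₁) / p, fun i => (b i - ν₂) / q,
    fun i hi => ⟨ha i hi, hb i hi, Nat.eq_of_mul_eq_mul_left (Nat.mul_pos hp hq) ?_⟩⟩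
  have h := hS i hi i₁ hi₁
  rw [ha i hi, hb i hi, hb i₁ hi₁, ← ha₁] at h
  dsimp only
  linarith

theorem exists_eq_X_pow_mul_bind₁_homogenize {R : Type*} [CommSemiring R] {p q : ℕ}
    (hp : 0 < p) (hq : 0 < q) (hcop : p.Coprime q) {P : MvPolynomial (Fin 2) R}
    (hP : ∀ m ∈ P.support, ∀ m' ∈ P.support, q * m 0 + p * m 1 = q * m' 0 + p * m' 1) :
    ∃ (ν₁ ν₂ N : ℕ) (f : Polynomial R), f.natDegree ≤ N ∧
      P = X 0 ^ ν₁ * X 1 ^ ν₂ * bind₁ ![X 1 ^ q, X 0 ^ p] (f.homogenize N) := by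
  obtain ⟨ν₁, ν₂, N, j, k, hjk⟩ := exists_eq_add_mul_of_weight_eq hp hq hcop (· 0) (· 1) P.support hP
  have hkN : ∀ m ∈ P.support, k m ≤ N := fun m hm => by have := (hjk m hm).2.2; omega
  refine ⟨ν₁, ν₂, N, ∑ m ∈ P.support, Polynomial.C (coeff m P) * Polynomial.X ^ k m,
    Polynomial.natDegree_sum_le_of_forall_le _ _ fun m hm =>
      (Polynomial.natDegree_C_mul_X_pow_le _ _).trans (hkN m hm), ?_⟩
  conv_lhs => rw [P.as_sum]
  rw [Polynomial.homogenize_finsetSum, map_sum, Finset.mul_sum]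
  refine Finset.sum_congr rfl fun m hm => ?_
  obtain ⟨h0, h1, hN⟩ := hjk m hm
  rw [Polynomial.homogenize_C_mul, Polynomial.homogenize_X_pow (hkN m hm), monomial_fin_two,
    h0, h1, show N - k m = j m by omega]
  simp only [map_mul, map_pow, bind₁_C_right, bind₁_X_right, Matrix.cons_val_zero,
    Matrix.cons_val_one]
  ring

theorem isHomogeneous_prod_map_X_sub_C_mul_X {K : Type*} [CommRing K] (s : Multiset K) :
    ((s.map fun a => X 0 - C a * X 1 : Multiset (MvPolynomial (Fin 2) K)).prod).IsHomogeneous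
      (Multiset.card s) := by
  induction s using Multiset.induction_on with
  | empty => simpa using isHomogeneous_one (Fin 2) K
  | cons a s ih =>
    have hlin : (X 0 - C a * X 1 : MvPolynomial (Fin 2) K).IsHomogeneous 1 :=
      (isHomogeneous_X K 0).sub (by simpa using (isHomogeneous_C _ a).mul (isHomogeneous_X K 1))
    simpa [add_comm] using hlin.mul ih

theorem homogenize_eq_of_splits {K : Type*} [Field K] {f : Polynomial K}
    (hf : f.Splits) {N : ℕ} (hN : f.natDegree ≤ N) :
    f.homogenize N = C f.leadingCoeff * X 1 ^ (N - f.natDegree) *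
      (f.roots.map fun a => X 0 - C a * X 1).prod := by
  apply Polynomial.homogenize_eq_of_isHomogeneous
  · have h := ((isHomogeneous_C _ f.leadingCoeff).mul (isHomogeneous_X_pow 1 (N - f.natDegree))).mul
      (isHomogeneous_prod_map_X_sub_C_mul_X f.roots)
    rwa [Polynomial.splits_iff_card_roots.mp hf, zero_add, Nat.sub_add_cancel hN] at h
  · conv_rhs => rw [hf.eq_prod_roots]
    simp [map_multiset_prod, Multiset.map_map]

theorem Multiset.prod_map_eq_pow_count_mul_prod_filter_ne {α β : Type*} [DecidableEq α]
    [CommMonoid β] (s : Multiset α) (g : α → β) (a : α) :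
    (s.map g).prod = g a ^ s.count a * ((s.filter (· ≠ a)).map g).prod := by
  conv_lhs => rw [← s.filter_add_not (· = a)]
  rw [map_add, prod_add, filter_eq', map_replicate, prod_replicate]

theorem exists_homogenize_map_eq {R K : Type*} [Field R] [Field K] [IsAlgClosed K]
    (φ : R →+* K) (f : Polynomial R) {N : ℕ} (hN : f.natDegree ≤ N) :
    ∃ (a : ℕ) (s : Multiset K), 0 ∉ s ∧ (f.map φ).homogenize N =
      C (φ f.leadingCoeff) * X 0 ^ a * X 1 ^ (N - f.natDegree) *
        (s.map fun z => X 0 - C z * X 1).prod := by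
  classical
  have hN' : (f.map φ).natDegree ≤ N := (Polynomial.natDegree_map φ).symm ▸ hN
  refine ⟨(f.map φ).roots.count 0, (f.map φ).roots.filter (· ≠ 0), by simp, ?_⟩
  rw [homogenize_eq_of_splits (IsAlgClosed.splits _) hN', Polynomial.leadingCoeff_map,
    Polynomial.natDegree_map, Multiset.prod_map_eq_pow_count_mul_prod_filter_ne _ _ 0]
  simp only [map_zero, zero_mul, sub_zero]
  ring

theorem Multiset.exists_injective_prod_map_eq {α β : Type*} [CommMonoid β] (s : Multiset α)
    (g : α → β) :
    ∃ (M : ℕ) (n : Fin M → ℕ) (a : Fin M → α), (∀ l, n l ≠ 0) ∧ (∀ l, a l ∈ s) ∧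
      Function.Injective a ∧ (s.map g).prod = ∏ l, g (a l) ^ n l := by
  classical
  set e := s.toFinset.equivFin.symm
  refine ⟨s.toFinset.card, fun l => s.count (e l : α), fun l => e l,
    fun l => (count_pos.mpr (mem_toFinset.mp (e l).2)).ne', fun l => mem_toFinset.mp (e l).2,
    Subtype.val_injective.comp e.injective, ?_⟩
  rw [Finset.prod_multiset_map_count, ← Finset.prod_coe_sort,
    ← e.prod_comp (fun x : s.toFinset => g x ^ s.count (x : α))]

open MvPolynomial in
theorem kappa_homogeneous_factorization_general
    (κ₁ κ₂ : ℝ) (hκ₁ : 0 < κ₁)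
    (p q : ℕ) (hp : 0 < p) (hq : 0 < q) (hcop : Nat.Coprime p q)
    (hratio : κ₂ / κ₁ = (p : ℝ) / (q : ℝ))
    (P : MvPolynomial (Fin 2) ℝ) (hP : P ≠ 0)
    (hhom : ∀ r : ℝ, 0 < r → ∀ x₁ x₂ : ℝ,
      eval ![r ^ κ₁ * x₁, r ^ κ₂ * x₂] P = r * eval ![x₁, x₂] P) :
    ∃ (c : ℝ) (ν₁ ν₂ M : ℕ) (nl : Fin M → ℕ) (lam : Fin M → ℂ),
      c ≠ 0 ∧ (∀ l, nl l ≠ 0) ∧ (∀ l, lam l ≠ 0) ∧ Function.Injective lam ∧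
      MvPolynomial.map (algebraMap ℝ ℂ) P =
        C (c : ℂ) * X 0 ^ ν₁ * X 1 ^ ν₂ *
          ∏ l : Fin M, (X 1 ^ q - C (lam l) * X 0 ^ p) ^ nl l := by
  have hline m (hm : m ∈ P.support) := weight_eq_one_of_mem_support hhom hm
  obtain ⟨ν₁, ν₂, N, f, hfN, hPf⟩ := exists_eq_X_pow_mul_bind₁_homogenize hp hq hcop
    fun m hm m' hm' => nat_weight_eq_of_ratio hκ₁.ne' hq.ne' hratio (hline m hm) (hline m' hm')
  have hf : f ≠ 0 := by
    rintro rfl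
    exact hP (by simpa using hPf)
  obtain ⟨a, s, hs0, hfac⟩ := exists_homogenize_map_eq (algebraMap ℝ ℂ) f hfN
  obtain ⟨M, nl, lam, hnl, hlam, hinj, hprod⟩ :=
    s.exists_injective_prod_map_eq fun z => (X 1 ^ q - C z * X 0 ^ p : MvPolynomial (Fin 2) ℂ)
  refine ⟨f.leadingCoeff, ν₁ + p * (N - f.natDegree), ν₂ + q * a, M, nl, lam,
    Polynomial.leadingCoeff_ne_zero.mpr hf, hnl, fun l h => hs0 (h ▸ hlam l), hinj, ?_⟩
  rw [hPf, map_mul, map_bind₁, ← Polynomial.homogenize_map, hfac, ← hprod]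
  simp only [map_mul, map_pow, map_sub, map_X, algHom_C, algebraMap_eq, bind₁_X_right,
    Matrix.cons_val_zero, Matrix.cons_val_one, map_multiset_prod, Multiset.map_map,
    Function.comp_apply, Complex.coe_algebraMap]
  ring

open MvPolynomial in
/-- factorization of a `κ`-homogeneous polynomial: a nonzero real
polynomial in two variables which is `κ`-homogeneous of degree one, with `κ₂/κ₁ = p/q` in
lowest terms, factorizes over `ℂ` as
`P = c x₁^{ν₁} x₂^{ν₂} ∏_{l=1}^M (x₂^q - λ_l x₁^p)^{n_l}` with `c ≠ 0` real, the `λ_l ∈ ℂ`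
distinct and nonzero, and the multiplicities `n_l ≥ 1`. -/
theorem kappa_homogeneous_factorization
    (κ₁ κ₂ : ℝ) (hκ₁ : 0 < κ₁) (hκ₂ : 0 < κ₂)
    (p q : ℕ) (hp : 0 < p) (hq : 0 < q) (hcop : Nat.Coprime p q)
    (hratio : κ₂ / κ₁ = (p : ℝ) / (q : ℝ))
    (P : MvPolynomial (Fin 2) ℝ) (hP : P ≠ 0)
    (hhom : ∀ r : ℝ, 0 < r → ∀ x₁ x₂ : ℝ,
      eval ![r ^ κ₁ * x₁, r ^ κ₂ * x₂] P = r * eval ![x₁, x₂] P) :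
    ∃ (c : ℝ) (ν₁ ν₂ M : ℕ) (nl : Fin M → ℕ) (lam : Fin M → ℂ),
      c ≠ 0 ∧ (∀ l, nl l ≠ 0) ∧ (∀ l, lam l ≠ 0) ∧ Function.Injective lam ∧
      MvPolynomial.map (algebraMap ℝ ℂ) P =
        C (c : ℂ) * X 0 ^ ν₁ * X 1 ^ ν₂ *
          ∏ l : Fin M, (X 1 ^ q - C (lam l) * X 0 ^ p) ^ nl l :=
  kappa_homogeneous_factorization_general κ₁ κ₂ hκ₁ p q hp hq hcop hratio P hP hhom

end
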